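/- arXiv:1212.0966 — 6 statements merged into one kernel-verified Lean document; each statement's English description precedes it below -/
import Mathlib

section
/- For an elementary doctrine P : C^op → InfSL whose base category C has a terminal object, condition (ii) of the elementary structure (existence of left adjoints to P_e for the maps e = ⟨pr1, pr2, pr2⟩ : X × A → X × A × A) implies condition (i) (existence of a left adjoint to P_{⟨id_A, id_A⟩} given by α ↦ P_{pr1}(α) ∧ δ_A). -/
open CategoryTheory CategoryTheory.Limits

universe u v w

/-- Layer 0: an indexed family of inf-semilattices over a category. -/
structure DocL0 (C : Type u) [Category.{v} C] where
  obj : C → Type w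
  semi : ∀ A : C, SemilatticeInf (obj A)

attribute [instance] DocL0.semi

/-- Layer 1: fibrewise top elements. -/
structure DocL1 (C : Type u) [Category.{v} C] extends DocL0.{u, v, w} C where
  otop : ∀ A : C, OrderTop (obj A)

attribute [instance] DocL1.otop

/-- A doctrine: an indexed inf-semilattice `P : Cᵒᵖ → InfSL`. -/
structure Doctrine (C : Type u) [Category.{v} C] extends DocL1.{u, v, w} C where
  map : ∀ {A B : C}, (A ⟶ B) → obj B → obj A
  map_id : ∀ (A : C) (x : obj A), map (𝟙 A) x = x
  map_comp : ∀ {A B D : C} (f : A ⟶ B) (g : B ⟶ D) (x : obj D),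
    map (f ≫ g) x = map f (map g x)
  map_mono : ∀ {A B : C} (f : A ⟶ B), Monotone (map f)
  map_inf : ∀ {A B : C} (f : A ⟶ B) (x y : obj B),
    map f (x ⊓ y) = map f x ⊓ map f y
  map_top : ∀ {A B : C} (f : A ⟶ B), map f (⊤ : obj B) = (⊤ : obj A)
/-- The data of an elementary doctrine: an indexed inf-semilattice together
with fibered equalities `δ_A ∈ P(A×A)`; the adjunction conditions (i) and
(ii) are stated separately below. -/
structure ElemData (C : Type u) [Category.{v} C] [HasBinaryProducts C] extends
    Doctrine.{u, v, w} C where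
  delta : ∀ A : C, obj (A ⨯ A)

namespace ElemData

variable {C : Type u} [Category.{v} C] [HasBinaryProducts C]

/-- Condition (i): `α ↦ P_{pr₁}(α) ∧ δ_A` is left adjoint to
`P_{⟨id_A,id_A⟩} : P(A×A) → P(A)`. -/
def CondI (P : ElemData.{u, v, w} C) : Prop :=
  ∀ {A : C} (α : P.obj A) (β : P.obj (A ⨯ A)),
    P.map prod.fst α ⊓ P.delta A ≤ β ↔ α ≤ P.map (diag A) β

/-- Condition (ii): for `e = ⟨pr₁,pr₂,pr₂⟩ : X×A → X×A×A`, the assignment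
`α ↦ P_{⟨pr₁,pr₂⟩}(α) ∧ P_{⟨pr₂,pr₃⟩}(δ_A)` is left adjoint to
`P_e : P(X×A×A) → P(X×A)`. -/
def CondII (P : ElemData.{u, v, w} C) : Prop :=
  ∀ {X A : C} (α : P.obj (X ⨯ A)) (β : P.obj ((X ⨯ A) ⨯ A)),
    P.map prod.fst α ⊓ P.map (prod.lift (prod.fst ≫ prod.snd) prod.snd) (P.delta A) ≤ β ↔
      α ≤ P.map (prod.lift (𝟙 (X ⨯ A)) prod.snd) β

end ElemData

/-!
Instantiate (ii) at `X` with any map `x : A ⟶ X` (for instance `X = A`, `x = 𝟙 A`). Both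
`⟨pr₂, pr₃⟩ : (X × A) × A → A × A` and `pr₂ : X × A → A` are split epimorphisms (with sections
built from `x`), so reindexing along them reflects the order, and (ii) transported along them
is exactly (i).
-/

namespace ElemData

variable {C : Type u} [Category.{v} C] [HasBinaryProducts C] (P : ElemData.{u, v, w} C)

theorem map_le_map_iff_of_comp_eq_id {A B : C} (f : A ⟶ B) (s : B ⟶ A) (hs : s ≫ f = 𝟙 B)
    {x y : P.obj B} : P.map f x ≤ P.map f y ↔ x ≤ y := by
  refine ⟨fun hxy => ?_, fun hxy => P.map_mono f hxy⟩
  simpa only [← P.map_comp, hs, P.map_id] using P.map_mono s hxy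

variable {P}

theorem CondII.fst_inf_delta_le_iff (hII : P.CondII) {X A : C} (x : A ⟶ X)
    (α : P.obj A) (β : P.obj (A ⨯ A)) :
    P.map prod.fst α ⊓ P.delta A ≤ β ↔ α ≤ P.map (diag A) β := by
  let f : (X ⨯ A) ⨯ A ⟶ A ⨯ A := prod.lift (prod.fst ≫ prod.snd) prod.snd
  have hf : prod.lift (prod.fst ≫ prod.lift x (𝟙 A)) prod.snd ≫ f = 𝟙 (A ⨯ A) := by
    ext <;> simp [f, prod.lift_snd, prod.lift_fst_assoc]
  have hsnd : prod.lift x (𝟙 A) ≫ (prod.snd : X ⨯ A ⟶ A) = 𝟙 A := prod.lift_snd _ _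
  have hfst : f ≫ prod.fst = (prod.fst : (X ⨯ A) ⨯ A ⟶ X ⨯ A) ≫ prod.snd := prod.lift_fst _ _
  have hdiag : prod.lift (𝟙 (X ⨯ A)) prod.snd ≫ f = (prod.snd : X ⨯ A ⟶ A) ≫ diag A := by
    ext <;> simp [f, prod.lift_fst, prod.lift_snd, prod.lift_fst_assoc]
  calc P.map prod.fst α ⊓ P.delta A ≤ β
      ↔ P.map f (P.map prod.fst α ⊓ P.delta A) ≤ P.map f β :=
        (P.map_le_map_iff_of_comp_eq_id f _ hf).symm
    _ ↔ P.map prod.fst (P.map prod.snd α) ⊓ P.map f (P.delta A) ≤ P.map f β := by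
        rw [P.map_inf, ← P.map_comp, ← P.map_comp, hfst]
    _ ↔ P.map prod.snd α ≤ P.map (prod.lift (𝟙 (X ⨯ A)) prod.snd) (P.map f β) := hII _ _
    _ ↔ P.map prod.snd α ≤ P.map prod.snd (P.map (diag A) β) := by
        rw [← P.map_comp, ← P.map_comp, hdiag]
    _ ↔ α ≤ P.map (diag A) β := P.map_le_map_iff_of_comp_eq_id _ _ hsnd

end ElemData

theorem condII_implies_condI_general
    {C : Type u} [Category.{v} C] [HasBinaryProducts C]
    (P : ElemData.{u, v, w} C) (h : ElemData.CondII P) : ElemData.CondI P :=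
  fun {A} => h.fst_inf_delta_le_iff (𝟙 A)

/-- if the base category has a terminal object, condition (ii)
of the elementary structure implies condition (i). -/
theorem condII_implies_condI
    {C : Type u} [Category.{v} C] [HasBinaryProducts C] [HasTerminal C]
    (P : ElemData.{u, v, w} C) (h : ElemData.CondII P) : ElemData.CondI P :=
  condII_implies_condI_general P h
end

section
/- In an elementary doctrine P, condition (ii) is equivalent to requiring that δ_{A×B} = δ_A ⊠ δ_B for every pair of objects A, B of the base category, where α₁ ⊠ α₂ := P_{⟨pr1,pr3⟩}(α₁) ∧ P_{⟨pr2,pr4⟩}(α₂) for α₁ ∈ P(X₁×Y₁), α₂ ∈ P(X₂×Y₂) and pr_i the projections from X₁×X₂×Y₁×Y₂. -/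
open CategoryTheory CategoryTheory.Limits

universe u v w

/-!
Both sides are equivalent, given (i), to substitutivity of equals in an arbitrary context,
`δ_A(a, a') ∧ β(z, a) ≤ β(z, a')`. Condition (ii) is this rule in the generic context, and
it implies (ii) back because `e` pulls `δ_A` back to `⊤`. Condition (i) alone already gives
the rule for `δ_{Z×A}` in place of `δ_A`; when `δ_{Z×A} = δ_Z ⊠ δ_A` this reduces to the rule
for `δ_A`, as `δ_Z(z, z) = ⊤`. Conversely, substituting first in the `B`-coordinate and then in
the `A`-coordinate gives `δ_A ⊠ δ_B ≤ δ_{A×B}`, and the reverse inequality is (i).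
-/

namespace ElemData

variable {C : Type u} [Category.{v} C] [HasBinaryProducts C] (P : ElemData.{u, v, w} C)

/-- The paper's `α₁ ⊠ α₂ = P_{⟨pr₁,pr₃⟩}(α₁) ∧ P_{⟨pr₂,pr₄⟩}(α₂)`. -/
noncomputable def box {X₁ Y₁ X₂ Y₂ : C} (α₁ : P.obj (X₁ ⨯ Y₁)) (α₂ : P.obj (X₂ ⨯ Y₂)) :
    P.obj ((X₁ ⨯ X₂) ⨯ (Y₁ ⨯ Y₂)) :=
  P.map (prod.lift (prod.fst ≫ prod.fst) (prod.snd ≫ prod.fst)) α₁ ⊓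
    P.map (prod.lift (prod.fst ≫ prod.snd) (prod.snd ≫ prod.snd)) α₂

/-- Substitutivity of equals in context `Z`: `δ_A(a, a') ∧ β(z, a) ≤ β(z, a')`. -/
def Substitutive : Prop :=
  ∀ {Z A : C} (a a' : Z ⟶ A) (β : P.obj (Z ⨯ A)),
    P.map (prod.lift a a') (P.delta A) ⊓ P.map (prod.lift (𝟙 Z) a) β ≤
      P.map (prod.lift (𝟙 Z) a') β

variable {P}

theorem delta_le_iff (hI : P.CondI) {A : C} (β : P.obj (A ⨯ A)) :
    P.delta A ≤ β ↔ P.map (diag A) β = ⊤ := by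
  simpa only [P.map_top, top_inf_eq, top_le_iff] using hI ⊤ β

theorem map_lift_self_delta (hI : P.CondI) {Z A : C} (f : Z ⟶ A) :
    P.map (prod.lift f f) (P.delta A) = ⊤ := by
  rw [← prod.comp_diag, P.map_comp, (delta_le_iff hI _).1 le_rfl, P.map_top]

theorem map_inf_map_lift_delta_le (hI : P.CondI) {Z A : C} (f g : Z ⟶ A) (β : P.obj A) :
    P.map f β ⊓ P.map (prod.lift f g) (P.delta A) ≤ P.map g β := by
  have h : P.map prod.fst β ⊓ P.delta A ≤ P.map prod.snd β :=
    (hI β _).2 (by rw [← P.map_comp, prod.lift_snd, P.map_id])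
  simpa only [P.map_inf, ← P.map_comp, prod.lift_fst, prod.lift_snd] using
    P.map_mono (prod.lift f g) h

theorem substitutive_of_condII (hII : P.CondII) : P.Substitutive := by
  intro Z A a a' β
  have h := (hII β (P.map (prod.lift (prod.fst ≫ prod.fst) prod.snd) β)).2 (by
    simp only [← P.map_comp, prod.comp_lift, prod.lift_fst_assoc, prod.lift_snd,
      Category.id_comp, prod.lift_fst_snd, P.map_id, le_refl])
  have := P.map_mono (prod.lift (prod.lift (𝟙 Z) a) a') h
  simpa only [P.map_inf, ← P.map_comp, prod.comp_lift, prod.lift_fst, prod.lift_snd,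
    prod.lift_fst_assoc, prod.lift_snd_assoc, Category.comp_id, inf_comm] using this

theorem condII_of_substitutive (hI : P.CondI) (hS : P.Substitutive) : P.CondII := by
  intro X A α β
  constructor
  · intro h
    simpa only [P.map_inf, ← P.map_comp, prod.comp_lift, prod.lift_fst, prod.lift_snd,
      prod.lift_fst_assoc, Category.id_comp, P.map_id, map_lift_self_delta hI, inf_top_eq]
      using P.map_mono (prod.lift (𝟙 (X ⨯ A)) prod.snd) h
  · intro h
    calc P.map prod.fst α ⊓ P.map (prod.lift (prod.fst ≫ prod.snd) prod.snd) (P.delta A)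
        ≤ P.map prod.fst (P.map (prod.lift (𝟙 (X ⨯ A)) prod.snd) β) ⊓
            P.map (prod.lift (prod.fst ≫ prod.snd) prod.snd) (P.delta A) :=
          inf_le_inf_right _ (P.map_mono _ h)
      _ ≤ β := by
        simpa only [← P.map_comp, prod.comp_lift, prod.lift_fst_assoc, prod.lift_snd,
          Category.id_comp, Category.comp_id, prod.lift_fst_snd, P.map_id, inf_comm] using
          hS (prod.fst ≫ prod.snd) prod.snd (P.map (prod.lift (prod.fst ≫ prod.fst) prod.snd) β)

theorem condII_iff_substitutive (hI : P.CondI) : P.CondII ↔ P.Substitutive :=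
  ⟨substitutive_of_condII, condII_of_substitutive hI⟩

theorem substitutive_of_delta_eq_box (hI : P.CondI)
    (h : ∀ A B : C, P.delta (A ⨯ B) = P.box (P.delta A) (P.delta B)) : P.Substitutive := by
  intro Z A a a' β
  simpa only [h, box, P.map_inf, ← P.map_comp, prod.comp_lift, prod.lift_fst_assoc,
    prod.lift_snd_assoc, prod.lift_fst, prod.lift_snd, map_lift_self_delta hI, top_inf_eq,
    inf_comm] using map_inf_map_lift_delta_le hI (prod.lift (𝟙 Z) a) (prod.lift (𝟙 Z) a') β

theorem map_lift_delta_inf_le (hI : P.CondI) (hS : P.Substitutive) {Z A B : C}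
    (a a' : Z ⟶ A) (b b' : Z ⟶ B) :
    P.map (prod.lift a a') (P.delta A) ⊓ P.map (prod.lift b b') (P.delta B) ≤
      P.map (prod.lift (prod.lift a b) (prod.lift a' b')) (P.delta (A ⨯ B)) := by
  -- substitute `b'` for `b` in `δ_{A×B}((a,b),(a,t))`, then `a'` for `a` in `δ_{A×B}((a,b),(t,b'))`
  have hB : P.map (prod.lift b b') (P.delta B) ≤
      P.map (prod.lift (prod.lift a b) (prod.lift a b')) (P.delta (A ⨯ B)) := by
    simpa only [← P.map_comp, prod.comp_lift, prod.lift_fst_assoc, prod.lift_snd,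
      Category.id_comp, map_lift_self_delta hI, inf_top_eq] using
      hS b b' (P.map (prod.lift (prod.lift (prod.fst ≫ a) (prod.fst ≫ b))
        (prod.lift (prod.fst ≫ a) prod.snd)) (P.delta (A ⨯ B)))
  have hA := hS a a' (P.map (prod.lift (prod.lift (prod.fst ≫ a) (prod.fst ≫ b))
    (prod.lift prod.snd (prod.fst ≫ b'))) (P.delta (A ⨯ B)))
  simp only [← P.map_comp, prod.comp_lift, prod.lift_fst_assoc, prod.lift_snd,
    Category.id_comp] at hA
  exact le_trans (inf_le_inf_left _ hB) hA

theorem delta_eq_box_of_substitutive (hI : P.CondI) (hS : P.Substitutive) (A B : C) :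
    P.delta (A ⨯ B) = P.box (P.delta A) (P.delta B) := by
  refine le_antisymm ((delta_le_iff hI _).2 ?_) ?_
  · simp only [box, P.map_inf, ← P.map_comp, prod.comp_lift, prod.lift_fst_assoc,
      prod.lift_snd_assoc, Category.id_comp, map_lift_self_delta hI, inf_top_eq]
  · simpa only [box, ← prod.comp_lift, prod.lift_fst_snd, Category.comp_id, P.map_id] using
      map_lift_delta_inf_le hI hS (prod.fst ≫ prod.fst) (prod.snd ≫ prod.fst)
        ((prod.fst : (A ⨯ B) ⨯ (A ⨯ B) ⟶ A ⨯ B) ≫ prod.snd) (prod.snd ≫ prod.snd)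

theorem substitutive_iff_delta_eq_box (hI : P.CondI) :
    P.Substitutive ↔ ∀ A B : C, P.delta (A ⨯ B) = P.box (P.delta A) (P.delta B) :=
  ⟨delta_eq_box_of_substitutive hI, substitutive_of_delta_eq_box hI⟩

end ElemData

/-- given condition (i), condition (ii) holds iff
`δ_{A×B} = δ_A ⊠ δ_B` for all objects `A`, `B`, where
`α₁ ⊠ α₂ = P_{⟨pr₁,pr₃⟩}(α₁) ∧ P_{⟨pr₂,pr₄⟩}(α₂)`. -/
theorem condII_iff_delta_box
    {C : Type u} [Category.{v} C] [HasBinaryProducts C]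
    (P : ElemData.{u, v, w} C) (hI : ElemData.CondI P) :
    ElemData.CondII P ↔
      ∀ A B : C,
        P.delta (A ⨯ B) =
          P.map (prod.lift (prod.fst ≫ prod.fst) (prod.snd ≫ prod.fst)) (P.delta A) ⊓
            P.map (prod.lift (prod.fst ≫ prod.snd) (prod.snd ≫ prod.snd)) (P.delta B) :=
  (ElemData.condII_iff_substitutive hI).trans (ElemData.substitutive_iff_delta_eq_box hI)
end

section
/- For a doctrine P : C^op → InfSL, the indexed poset P̂ on Gr(P) defined by P̂(A,α) := {γ ∈ P(A) | γ ≤ α} (with reindexing inherited from P) has full comprehensions: for each γ ∈ P̂(A,α), the map id_A : (A,γ) → (A,α) is a comprehension of γ, and γ ≤ γ' whenever the comprehension of γ factors through that of γ'. -/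
open CategoryTheory CategoryTheory.Limits

universe u v w

/-- The category `Gr(P)` of points of a doctrine `P`: objects are pairs
`(A, α)` with `α ∈ P(A)`; an arrow `f : (A,α) → (B,β)` is `f : A ⟶ B`
with `α ≤ P_f(β)`. -/
def GrOb {C : Type u} [Category.{v} C] (P : Doctrine.{u, v, w} C) := Σ A : C, P.obj A

instance grCategory {C : Type u} [Category.{v} C] (P : Doctrine.{u, v, w} C) :
    Category (GrOb P) where
  Hom X Y := {f : X.1 ⟶ Y.1 // X.2 ≤ P.map f Y.2}
  id X := ⟨𝟙 X.1, by rw [P.map_id]⟩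
  comp {X Y Z} f g :=
    ⟨f.1 ≫ g.1, by rw [P.map_comp]; exact le_trans f.2 (P.map_mono f.1 g.2)⟩
  id_comp f := Subtype.ext (Category.id_comp f.1)
  comp_id f := Subtype.ext (Category.comp_id f.1)
  assoc f g h := Subtype.ext (Category.assoc f.1 g.1 h.1)

/-- Build an arrow of `Gr(P)`. -/
def grMk {C : Type u} [Category.{v} C] {P : Doctrine.{u, v, w} C} {X Y : GrOb P}
    (f : X.1 ⟶ Y.1) (h : X.2 ≤ P.map f Y.2) : X ⟶ Y := ⟨f, h⟩

/-- Underlying `C`-arrow of a `Gr(P)`-arrow. -/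
def grU {C : Type u} [Category.{v} C] {P : Doctrine.{u, v, w} C} {X Y : GrOb P}
    (f : X ⟶ Y) : X.1 ⟶ Y.1 := f.1

/-- the indexed poset `P̂(A,α) = {γ ∈ P(A) | γ ≤ α}` on `Gr(P)`
has full comprehensions: `id_A : (A,γ) → (A,α)` is a comprehension of
`γ ∈ P̂(A,α)` (its `P̂`-reindexing of `γ` is the top of the fibre, and every
map `f` with `P̂_f(γ) = ⊤` factors uniquely through it), and `γ ≤ γ'`
whenever the comprehension of `γ` factors through that of `γ'`. -/
theorem hat_has_full_comprehensions
    {C : Type u} [Category.{v} C] (P : Doctrine.{u, v, w} C)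
    {A : C} (α γ : P.obj A) (hγ : γ ≤ α) :
    (P.map (𝟙 A) γ ⊓ γ = γ) ∧
    (∀ (Z : GrOb P) (f : Z ⟶ (⟨A, α⟩ : GrOb P)), Z.2 ≤ P.map (grU f) γ →
      ∃! g : Z ⟶ (⟨A, γ⟩ : GrOb P),
        g ≫ grMk (X := (⟨A, γ⟩ : GrOb P)) (Y := (⟨A, α⟩ : GrOb P)) (𝟙 A)
            (by rw [P.map_id]; exact hγ) = f) ∧
    (∀ (γ' : P.obj A), γ' ≤ α →
      (∃ k : A ⟶ A, γ ≤ P.map k γ' ∧ k ≫ 𝟙 A = 𝟙 A) →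
      γ ≤ γ') := by
  refine ⟨by rw [P.map_id]; exact inf_idem γ, ?_, ?_⟩
  · intro Z f h
    refine ⟨⟨f.1, h⟩, ?_, ?_⟩
    · apply Subtype.ext; simp [grMk, grU, CategoryStruct.comp]
    · intro g hg
      apply Subtype.ext
      have := congrArg Subtype.val hg
      simpa [grMk, grU, CategoryStruct.comp] using this
  · intro γ' h' ⟨k, hk, hk1⟩
    have : k = 𝟙 A := by simpa using hk1
    rw [this, P.map_id] at hk
    exact hk
end

section
/- If P : C^op → InfSL is an elementary existential doctrine, then the doctrine P̂ : Gr(P)^op → InfSL, P̂(A,α) = {γ ∈ P(A) | γ ≤ α}, is again elementary and existential, with equality element δ_{(A,α)} = δ_A ∧ P_{pr1}(α) ∧ P_{pr2}(α) and existential quantification along the projection (A×B, P_{pr1}α ∧ P_{pr2}β) → (A,α) given by γ ↦ ∃_{pr1}(γ) ∧ α; moreover the pair (I, id) with I(A) = (A, ⊤_A) is a 1-arrow of elementary existential doctrines P → P̂ preserving the existential structure. -/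
open CategoryTheory CategoryTheory.Limits

universe u v w

/-- An elementary existential doctrine. -/
structure EED (C : Type u) [Category.{v} C] [HasBinaryProducts C] extends
    Doctrine.{u, v, w} C where
  delta : ∀ A : C, obj (A ⨯ A)
  elem_i : ∀ {A : C} (α : obj A) (β : obj (A ⨯ A)),
    map prod.fst α ⊓ delta A ≤ β ↔ α ≤ map (diag A) β
  elem_ii : ∀ {X A : C} (α : obj (X ⨯ A)) (β : obj ((X ⨯ A) ⨯ A)),
    map prod.fst α ⊓ map (prod.lift (prod.fst ≫ prod.snd) prod.snd) (delta A) ≤ β ↔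
      α ≤ map (prod.lift (𝟙 (X ⨯ A)) prod.snd) β
  ex : ∀ {A B : C}, (A ⟶ B) → obj A → obj B
  ex_adj : ∀ {A B : C} (f : A ⟶ B) (α : obj A) (β : obj B),
    ex f α ≤ β ↔ α ≤ map f β
  frobenius : ∀ {A B : C} (f : A ⟶ B) (α : obj B) (β : obj A),
    ex f (map f α ⊓ β) = α ⊓ ex f β
  beck_chevalley : ∀ {A A' B : C} (f : A' ⟶ A) (β : obj (A ⨯ B)),
    ex prod.fst (map (prod.map f (𝟙 B)) β) = map f (ex prod.fst β)

namespace EED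

variable {C : Type u} [Category.{v} C] [HasBinaryProducts C] (P : EED.{u, v, w} C)

/-- Relational composition `∃_{p₂}(P_{⟨p₁,p₂⟩}(θ) ∧ P_{⟨p₂,p₃⟩}(ζ))`. -/
noncomputable def comp {A B D : C} (θ : P.obj (A ⨯ B)) (ζ : P.obj (B ⨯ D)) : P.obj (A ⨯ D) :=
  P.ex (prod.lift (prod.fst ≫ prod.fst) prod.snd)
    (P.map prod.fst θ ⊓ P.map (prod.lift (prod.fst ≫ prod.snd) prod.snd) ζ)

/-- Opposite relation `P_{⟨p₂,p₁⟩}(θ)`. -/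
noncomputable def op {A B : C} (θ : P.obj (A ⨯ B)) : P.obj (B ⨯ A) :=
  P.map (prod.lift prod.snd prod.fst) θ

/-- `ρ ≤ P_{⟨p₂,p₁⟩}(ρ)`. -/
def SymmRel {A : C} (ρ : P.obj (A ⨯ A)) : Prop :=
  ρ ≤ P.map (prod.lift prod.snd prod.fst) ρ

/-- `P_{⟨p₁,p₂⟩}(ρ) ∧ P_{⟨p₂,p₃⟩}(ρ) ≤ P_{⟨p₁,p₃⟩}(ρ)` in `P((A×A)×A)`. -/
def TransRel {A : C} (ρ : P.obj (A ⨯ A)) : Prop :=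
  P.map prod.fst ρ ⊓ P.map (prod.lift (prod.fst ≫ prod.snd) prod.snd) ρ ≤
    P.map (prod.lift (prod.fst ≫ prod.fst) prod.snd) ρ

/-- `δ_A ≤ ρ`. -/
def ReflRel {A : C} (ρ : P.obj (A ⨯ A)) : Prop := P.delta A ≤ ρ

/-- A `P`-equivalence relation. -/
def EqRel {A : C} (ρ : P.obj (A ⨯ A)) : Prop :=
  P.ReflRel ρ ∧ P.SymmRel ρ ∧ P.TransRel ρ

/-- Conditions (i)–(v) for an arrow `φ : ⟨A,ρ⟩ → ⟨B,σ⟩` of the exact completion `T_P`. -/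
def IsArrow {A B : C} (ρ : P.obj (A ⨯ A)) (σ : P.obj (B ⨯ B)) (φ : P.obj (A ⨯ B)) : Prop :=
  (φ ≤ P.map (prod.lift prod.fst prod.fst) ρ ⊓ P.map (prod.lift prod.snd prod.snd) σ) ∧
  (P.map prod.fst ρ ⊓ P.map (prod.lift (prod.fst ≫ prod.snd) prod.snd) φ ≤
      P.map (prod.lift (prod.fst ≫ prod.fst) prod.snd) φ) ∧
  (P.map prod.fst φ ⊓ P.map (prod.lift (prod.fst ≫ prod.snd) prod.snd) σ ≤
      P.map (prod.lift (prod.fst ≫ prod.fst) prod.snd) φ) ∧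
  (P.map prod.fst φ ⊓ P.map (prod.lift (prod.fst ≫ prod.fst) prod.snd) φ ≤
      P.map (prod.lift (prod.fst ≫ prod.snd) prod.snd) σ) ∧
  (P.map (diag A) ρ ≤ P.ex prod.fst φ)

/-- The graph relation `L[f] = ∃_{p₂}(P_{⟨p₁,p₂⟩}(ρ) ∧ P_{⟨f∘p₂,p₃⟩}(σ))` in `P(A×B)`. -/
noncomputable def Lrel {A B : C} (f : A ⟶ B) (ρ : P.obj (A ⨯ A)) (σ : P.obj (B ⨯ B)) : P.obj (A ⨯ B) :=
  P.ex (prod.lift (prod.fst ≫ prod.fst) prod.snd)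
    (P.map prod.fst ρ ⊓ P.map (prod.lift (prod.fst ≫ prod.snd ≫ f) prod.snd) σ)

end EED

/-- for an elementary existential doctrine `P`, the doctrine
`P̂(A,α) = {γ ∈ P(A) | γ ≤ α}` on `Gr(P)` is again elementary and existential,
with equality `δ̂_{(A,α)} = δ_A ∧ P_{pr₁}(α) ∧ P_{pr₂}(α)` and existential
quantification along the product projection given by `γ ↦ ∃_{pr₁}(γ) ∧ α`;
moreover `(I, id)` with `I(A) = (A, ⊤_A)` is a 1-arrow of elementary
existential doctrines `P → P̂` preserving the existential structure. -/
theorem hat_elementary_existential_and_I_one_arrow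
    {C : Type u} [Category.{v} C] [HasBinaryProducts C] (P : EED.{u, v, w} C) :
    -- the equality element is a well-defined element of the fibre over the product
    (∀ (A : C) (α : P.obj A),
      P.delta A ⊓ P.map prod.fst α ⊓ P.map prod.snd α ≤
        P.map prod.fst α ⊓ P.map prod.snd α) ∧
    -- elementary adjunction (condition (i)) for `P̂`
    (∀ (A : C) (α : P.obj A) (γ : P.obj A) (β : P.obj (A ⨯ A)),
      γ ≤ α → β ≤ P.map prod.fst α ⊓ P.map prod.snd α →
      ((P.map prod.fst γ ⊓ (P.delta A ⊓ P.map prod.fst α ⊓ P.map prod.snd α) ≤ β) ↔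
        γ ≤ P.map (diag A) β ⊓ α)) ∧
    -- existential adjunction for `P̂` along the product projection
    (∀ (A B : C) (α : P.obj A) (β : P.obj B) (γ : P.obj (A ⨯ B)) (ε : P.obj A),
      γ ≤ P.map prod.fst α ⊓ P.map prod.snd β → ε ≤ α →
      ((P.ex prod.fst γ ⊓ α ≤ ε) ↔
        γ ≤ P.map prod.fst ε ⊓ (P.map prod.fst α ⊓ P.map prod.snd β))) ∧
    -- Frobenius reciprocity for `P̂`
    (∀ (A B : C) (α : P.obj A) (β : P.obj B) (γ : P.obj (A ⨯ B)) (ε : P.obj A),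
      γ ≤ P.map prod.fst α ⊓ P.map prod.snd β → ε ≤ α →
      P.ex prod.fst ((P.map prod.fst ε ⊓ (P.map prod.fst α ⊓ P.map prod.snd β)) ⊓ γ) ⊓ α =
        ε ⊓ (P.ex prod.fst γ ⊓ α)) ∧
    -- `I(A) = (A, ⊤)` is well defined on arrows (so `(I, id)` is a 1-arrow)
    (∀ (A B : C) (f : A ⟶ B), (⊤ : P.obj A) ≤ P.map f (⊤ : P.obj B)) ∧
    -- `id` preserves the equality element: `b(δ_A) = δ̂_{I(A)}`
    (∀ A : C,
      P.delta A ⊓ P.map prod.fst (⊤ : P.obj A) ⊓ P.map prod.snd (⊤ : P.obj A) =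
        P.delta A) ∧
    -- `id` preserves the existential quantifiers
    (∀ (A B : C) (γ : P.obj (A ⨯ B)),
      P.ex prod.fst γ ⊓ (⊤ : P.obj A) = P.ex prod.fst γ) := by
  have key : ∀ (A : C) (α : P.obj A),
      P.map prod.fst α ⊓ P.delta A ≤ P.map prod.snd α := by
    intro A α
    rw [P.elem_i]
    have : P.map (diag A) (P.map (prod.snd : A ⨯ A ⟶ A) α) = α := by
      rw [← P.map_comp]
      simp only [diag, prod.lift_snd, P.map_id]
    rw [this]
  refine ⟨?_, ?_, ?_, ?_, ?_, ?_, ?_⟩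
  · intro A α
    exact le_inf (le_trans inf_le_left inf_le_right) inf_le_right
  · intro A α γ β hγ hβ
    constructor
    · intro h
      refine le_inf ?_ hγ
      rw [← P.elem_i]
      refine le_trans ?_ h
      have h1 : P.map (prod.fst : A ⨯ A ⟶ A) γ ⊓ P.delta A ≤
          P.map prod.fst α ⊓ P.delta A :=
        inf_le_inf_right _ (P.map_mono _ hγ)
      exact le_inf inf_le_left (le_inf (le_inf inf_le_right
        (le_trans h1 inf_le_left)) (le_trans h1 (key A α)))
    · intro h
      have h1 : γ ≤ P.map (diag A) β := le_trans h inf_le_left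
      rw [← P.elem_i] at h1
      refine le_trans ?_ h1
      exact inf_le_inf_left _ (le_trans inf_le_left inf_le_left)
  · intro A B α β γ ε hγ hε
    constructor
    · intro h
      refine le_inf ?_ hγ
      have h1 : γ ≤ P.map prod.fst (P.ex prod.fst γ) :=
        (P.ex_adj _ _ _).mp le_rfl
      have h2 : γ ≤ P.map prod.fst (P.ex prod.fst γ ⊓ α) := by
        rw [P.map_inf]
        exact le_inf h1 (le_trans hγ inf_le_left)
      exact le_trans h2 (P.map_mono _ h)
    · intro h
      have h1 : γ ≤ P.map prod.fst ε := le_trans h inf_le_left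
      exact le_trans inf_le_left ((P.ex_adj _ _ _).mpr h1)
  · intro A B α β γ ε hγ hε
    have h1 : (P.map (prod.fst : A ⨯ B ⟶ A) ε ⊓
        (P.map prod.fst α ⊓ P.map prod.snd β)) ⊓ γ = P.map prod.fst ε ⊓ γ := by
      rw [inf_assoc, inf_of_le_right hγ]
    rw [h1, P.frobenius, inf_assoc]
  · intro A B f
    rw [P.map_top]
  · intro A
    rw [P.map_top, P.map_top, inf_top_eq, inf_top_eq]
  · intro A B γ
    exact inf_top_eq _
end

section
/- In an elementary existential doctrine with full comprehensions, every element α ∈ P(A) satisfies α = ∃_{⦃α⦄}(⊤), where ⦃α⦄ is the comprehension map of α and ∃ along ⦃α⦄ is the derived existential quantifier. -/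
open CategoryTheory CategoryTheory.Limits

universe u v w

/-- in an elementary existential doctrine with full
comprehensions, every `α ∈ P(A)` satisfies `α = ∃_{⦃α⦄}(⊤)`. -/
theorem eq_ex_comprehension_top
    {C : Type u} [Category.{v} C] [HasBinaryProducts C] (P : EED.{u, v, w} C)
    (cob : ∀ {A : C}, P.obj A → C) (cm : ∀ {A : C} (α : P.obj A), cob α ⟶ A)
    (hc_top : ∀ {A : C} (α : P.obj A), P.map (cm α) α = ⊤)
    (hc_univ : ∀ {A : C} (α : P.obj A) {Z : C} (f : Z ⟶ A),
      P.map f α = ⊤ → ∃! g : Z ⟶ cob α, g ≫ cm α = f)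
    (hc_full : ∀ {A : C} (α β : P.obj A) (k : cob α ⟶ cob β),
      k ≫ cm β = cm α → α ≤ β)
    {A : C} (α : P.obj A) :
    α = P.ex (cm α) ⊤ := by
  apply le_antisymm
  · have h1 : (⊤ : P.obj (cob α)) ≤ P.map (cm α) (P.ex (cm α) ⊤) :=
      (P.ex_adj (cm α) ⊤ _).mp le_rfl
    have h2 : P.map (cm α) (P.ex (cm α) ⊤) = ⊤ := le_antisymm le_top h1
    obtain ⟨k, hk, _⟩ := hc_univ (P.ex (cm α) ⊤) (cm α) h2
    exact hc_full α _ k hk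
  · exact (P.ex_adj (cm α) ⊤ α).mpr (hc_top α).ge
end

section
/- For a cartesian category S with weak pullbacks, the weak-subobjects functor Ψ : S^op → InfSL, sending A to the poset reflection of the slice S/A, is an elementary existential doctrine: each fibre is an inf-semilattice, the equality δ_A ∈ Ψ(A×A) is the class of the diagonal ⟨id_A,id_A⟩ : A → A×A, and post-composition with projections gives left adjoints to reindexing satisfying Beck–Chevalley and Frobenius reciprocity. -/
/-!
Every inequality is witnessed by an explicit arrow between representatives, built from the
weak universal property of the chosen weak pullbacks; none of them needs uniqueness of the
factorisations. Frobenius holds along any arrow, the elementary structure along any split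
mono, and Beck–Chevalley along any pullback square, in particular the square formed by
`pr₁` and `f × 1`.
-/

open CategoryTheory CategoryTheory.Limits

universe u v

/-- A choice of weak pullbacks: for every cospan a weakly universal cone. -/
structure WeakPullbacks (S : Type u) [Category.{v} S] where
  obj : ∀ {X Y Z : S}, (X ⟶ Z) → (Y ⟶ Z) → S
  fst : ∀ {X Y Z : S} (f : X ⟶ Z) (g : Y ⟶ Z), obj f g ⟶ X
  snd : ∀ {X Y Z : S} (f : X ⟶ Z) (g : Y ⟶ Z), obj f g ⟶ Y
  comm : ∀ {X Y Z : S} (f : X ⟶ Z) (g : Y ⟶ Z), fst f g ≫ f = snd f g ≫ g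
  lift : ∀ {X Y Z V : S} {f : X ⟶ Z} {g : Y ⟶ Z} (a : V ⟶ X) (b : V ⟶ Y),
    a ≫ f = b ≫ g → (V ⟶ obj f g)
  lift_fst : ∀ {X Y Z V : S} {f : X ⟶ Z} {g : Y ⟶ Z} (a : V ⟶ X) (b : V ⟶ Y)
    (h : a ≫ f = b ≫ g), lift a b h ≫ fst f g = a
  lift_snd : ∀ {X Y Z V : S} {f : X ⟶ Z} {g : Y ⟶ Z} (a : V ⟶ X) (b : V ⟶ Y)
    (h : a ≫ f = b ≫ g), lift a b h ≫ snd f g = b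

variable {S : Type u} [Category.{v} S]

/-- Representatives of weak subobjects of `A`: arrows into `A`. The fibre
`Ψ(A)` is the poset reflection of this preordered type. -/
def Om (A : S) := Σ X : S, X ⟶ A

/-- The weak-subobject preorder: `f ≤ g` iff `f` factors through `g`.
The poset reflection of this preorder is the fibre `Ψ(A)`. -/
def wle {A : S} (f g : Om A) : Prop := ∃ k : f.1 ⟶ g.1, k ≫ g.2 = f.2

/-- Reindexing `Ψ_h`, computed by weak pullback along `h`. -/
noncomputable def wreindex (W : WeakPullbacks S) {A B : S} (h : B ⟶ A) (f : Om A) :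
    Om B := ⟨W.obj f.2 h, W.snd f.2 h⟩

/-- Binary meet in the fibre, computed by weak pullback. -/
noncomputable def wmeet (W : WeakPullbacks S) {A : S} (f g : Om A) : Om A :=
  ⟨W.obj f.2 g.2, W.fst f.2 g.2 ≫ f.2⟩

/-- The left adjoint `∃_h`, computed by post-composition. -/
def wpush {A B : S} (h : A ⟶ B) (f : Om A) : Om B := ⟨f.1, f.2 ≫ h⟩

section WeakSubobjects

variable (W : WeakPullbacks S)

theorem wmeet_wle_left {A : S} (f g : Om A) : wle (wmeet W f g) f :=
  ⟨W.fst f.2 g.2, rfl⟩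

theorem wmeet_wle_right {A : S} (f g : Om A) : wle (wmeet W f g) g :=
  ⟨W.snd f.2 g.2, (W.comm f.2 g.2).symm⟩

theorem wle_wmeet {A : S} {f g h : Om A} (hf : wle h f) (hg : wle h g) :
    wle h (wmeet W f g) := by
  obtain ⟨k, hk⟩ := hf
  obtain ⟨l, hl⟩ := hg
  refine ⟨W.lift k l (hk.trans hl.symm), ?_⟩
  dsimp only [wmeet]
  rw [reassoc_of% W.lift_fst, hk]

theorem wle_top {A : S} (f : Om A) : wle f ⟨A, 𝟙 A⟩ :=
  ⟨f.2, Category.comp_id _⟩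

theorem wpush_wle_iff_wle_wreindex {A B : S} (h : B ⟶ A) (f : Om B) (g : Om A) :
    wle (wpush h f) g ↔ wle f (wreindex W h g) := by
  obtain ⟨Y, y⟩ := f
  obtain ⟨X, x⟩ := g
  dsimp only [wle, wpush, wreindex]
  constructor
  · rintro ⟨k, hk⟩
    exact ⟨W.lift k y hk, W.lift_snd k y hk⟩
  · rintro ⟨k, rfl⟩
    exact ⟨k ≫ W.fst x h, by rw [Category.assoc, W.comm, Category.assoc]⟩

theorem wmeet_wreindex_wle_wpush_of_retraction {A B : S} {s : A ⟶ B} {r : B ⟶ A}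
    (hsr : s ≫ r = 𝟙 A) (α : Om A) :
    wle (wmeet W (wreindex W r α) ⟨A, s⟩) (wpush s α) := by
  obtain ⟨X, x⟩ := α
  dsimp only [wle, wmeet, wpush, wreindex]
  refine ⟨W.fst (W.snd x r) s ≫ W.fst x r, ?_⟩
  rw [Category.assoc, reassoc_of% W.comm, reassoc_of% W.comm, reassoc_of% hsr, W.comm]

theorem wpush_wle_wmeet_wreindex_of_retraction {A B : S} {s : A ⟶ B} {r : B ⟶ A}
    (hsr : s ≫ r = 𝟙 A) (α : Om A) :
    wle (wpush s α) (wmeet W (wreindex W r α) ⟨A, s⟩) := by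
  obtain ⟨X, x⟩ := α
  dsimp only [wle, wmeet, wpush, wreindex]
  have hx : 𝟙 X ≫ x = (x ≫ s) ≫ r := by
    rw [Category.assoc, hsr, Category.id_comp, Category.comp_id]
  have hm : W.lift (𝟙 X) (x ≫ s) hx ≫ W.snd x r = x ≫ s := W.lift_snd _ _ hx
  exact ⟨W.lift _ x hm, by rw [reassoc_of% W.lift_fst, hm]⟩

theorem wpush_wmeet_wreindex_wle {A B : S} (h : B ⟶ A) (α : Om A) (β : Om B) :
    wle (wpush h (wmeet W (wreindex W h α) β)) (wmeet W α (wpush h β)) := by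
  obtain ⟨X, x⟩ := α
  obtain ⟨Y, y⟩ := β
  dsimp only [wle, wmeet, wpush, wreindex]
  have hk : (W.fst (W.snd x h) y ≫ W.fst x h) ≫ x = W.snd (W.snd x h) y ≫ y ≫ h := by
    rw [Category.assoc, W.comm, reassoc_of% W.comm]
  refine ⟨W.lift _ _ hk, ?_⟩
  rw [reassoc_of% W.lift_fst, hk, Category.assoc, reassoc_of% W.comm]

theorem wmeet_wpush_wle_wpush_wmeet_wreindex {A B : S} (h : B ⟶ A) (α : Om A) (β : Om B) :
    wle (wmeet W α (wpush h β)) (wpush h (wmeet W (wreindex W h α) β)) := by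
  obtain ⟨X, x⟩ := α
  obtain ⟨Y, y⟩ := β
  dsimp only [wle, wmeet, wpush, wreindex]
  have hxy : W.fst x (y ≫ h) ≫ x = (W.snd x (y ≫ h) ≫ y) ≫ h := by
    rw [W.comm, Category.assoc]
  have hm : W.lift _ _ hxy ≫ W.snd x h = W.snd x (y ≫ h) ≫ y := W.lift_snd _ _ hxy
  refine ⟨W.lift _ _ hm, ?_⟩
  rw [Category.assoc, reassoc_of% W.lift_fst, reassoc_of% hm, hxy, Category.assoc]

theorem wpush_wreindex_wle_wreindex_wpush {X X' A A' : S} {h' : X' ⟶ A'} {k : X' ⟶ X}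
    {f : A' ⟶ A} {h : X ⟶ A} (sq : CommSq h' k f h) (β : Om X) :
    wle (wpush h' (wreindex W k β)) (wreindex W f (wpush h β)) := by
  obtain ⟨Y, y⟩ := β
  dsimp only [wle, wpush, wreindex]
  have hk : W.fst y k ≫ y ≫ h = (W.snd y k ≫ h') ≫ f := by
    rw [reassoc_of% W.comm, Category.assoc, sq.w]
  exact ⟨W.lift _ _ hk, W.lift_snd _ _ hk⟩

theorem wreindex_wpush_wle_wpush_wreindex {X X' A A' : S} {h' : X' ⟶ A'} {k : X' ⟶ X}
    {f : A' ⟶ A} {h : X ⟶ A} (sq : IsPullback h' k f h) (β : Om X) :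
    wle (wreindex W f (wpush h β)) (wpush h' (wreindex W k β)) := by
  obtain ⟨Y, y⟩ := β
  dsimp only [wle, wpush, wreindex]
  have hyf : W.snd (y ≫ h) f ≫ f = (W.fst (y ≫ h) f ≫ y) ≫ h := by
    rw [← W.comm, Category.assoc]
  have hc : W.fst (y ≫ h) f ≫ y = sq.lift _ _ hyf ≫ k := (sq.lift_snd _ _ hyf).symm
  exact ⟨W.lift _ _ hc, by rw [reassoc_of% W.lift_snd, sq.lift_fst]⟩

end WeakSubobjects

/-- for a cartesian category `S` with weak pullbacks, the
weak-subobjects functor `Ψ` is an elementary existential doctrine: each fibre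
is an inf-semilattice with top, `δ_A` is the class of the diagonal, and
post-composition along projections is left adjoint to reindexing, satisfying
Beck–Chevalley and Frobenius reciprocity (all stated on representatives,
i.e. up to the poset reflection). -/
theorem weak_subobjects_elementary_existential
    (S : Type u) [Category.{v} S] [HasBinaryProducts S] (W : WeakPullbacks S) :
    -- binary meets: `wmeet` is a greatest lower bound
    (∀ (A : S) (f g : Om A),
      wle (wmeet W f g) f ∧ wle (wmeet W f g) g ∧
        ∀ h : Om A, wle h f → wle h g → wle h (wmeet W f g)) ∧
    -- top element
    (∀ (A : S) (f : Om A), wle f ⟨A, 𝟙 A⟩) ∧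
    -- post-composition is left adjoint to reindexing by weak pullback
    (∀ (A B : S) (h : B ⟶ A) (f : Om B) (g : Om A),
      wle (wpush h f) g ↔ wle f (wreindex W h g)) ∧
    -- elementary structure: `Ψ_{pr₁}(α) ∧ δ_A` represents `∃_{⟨id,id⟩}(α)`
    (∀ (A : S) (α : Om A),
      wle (wmeet W (wreindex W (prod.fst : A ⨯ A ⟶ A) α) ⟨A, diag A⟩)
          (wpush (diag A) α) ∧
      wle (wpush (diag A) α)
          (wmeet W (wreindex W (prod.fst : A ⨯ A ⟶ A) α) ⟨A, diag A⟩)) ∧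
    -- Frobenius reciprocity along projections
    (∀ (A B : S) (α : Om A) (β : Om (A ⨯ B)),
      wle (wpush prod.fst (wmeet W (wreindex W (prod.fst : A ⨯ B ⟶ A) α) β))
          (wmeet W α (wpush prod.fst β)) ∧
      wle (wmeet W α (wpush prod.fst β))
          (wpush prod.fst (wmeet W (wreindex W (prod.fst : A ⨯ B ⟶ A) α) β))) ∧
    -- Beck–Chevalley condition for the standard squares
    (∀ (A A' B : S) (f : A' ⟶ A) (β : Om (A ⨯ B)),
      wle (wpush prod.fst (wreindex W (prod.map f (𝟙 B)) β))
          (wreindex W f (wpush prod.fst β)) ∧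
      wle (wreindex W f (wpush prod.fst β))
          (wpush prod.fst (wreindex W (prod.map f (𝟙 B)) β))) :=
  have hdiag (A : S) : diag A ≫ prod.fst = 𝟙 A := prod.lift_fst _ _
  have hsq (A A' B : S) (f : A' ⟶ A) := IsPullback.of_prod_fst_with_id f B
  ⟨fun _ f g => ⟨wmeet_wle_left W f g, wmeet_wle_right W f g, fun _ => wle_wmeet W⟩,
    fun _ => wle_top,
    fun _ _ => wpush_wle_iff_wle_wreindex W,
    fun A α => ⟨wmeet_wreindex_wle_wpush_of_retraction W (hdiag A) α,
      wpush_wle_wmeet_wreindex_of_retraction W (hdiag A) α⟩,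
    fun _ _ α β => ⟨wpush_wmeet_wreindex_wle W prod.fst α β,
      wmeet_wpush_wle_wpush_wmeet_wreindex W prod.fst α β⟩,
    fun A A' B f β => ⟨wpush_wreindex_wle_wreindex_wpush W (hsq A A' B f).toCommSq β,
      wreindex_wpush_wle_wpush_wreindex W (hsq A A' B f) β⟩⟩
end
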